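/- arXiv:1409.8163 — 4 statements merged into one kernel-verified Lean document; each statement's English description precedes it below -/
import Mathlib

section
/- In the Clifford algebra Cl(p,q) over ℝ of odd dimension n = p+q, for any two elements U, V, the coefficient of the top basis element e^{1...n} in UV equals that in VU, i.e. π(UV) = π(VU). -/
/-- Ordered product `e^{a_1} ⋯ e^{a_k}` (`a_1 < ⋯ < a_k`) of generators over an
ordered multi-index, encoded as a finset of indices. For `s = ∅` this is `1 = e`. -/
def cliffProd {n : ℕ} {A : Type*} [Ring A] (e : Fin n → A) (s : Finset (Fin n)) : A :=
  ((s.sort (· ≤ ·)).map e).prod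

/-- The entries of the diagonal matrix `η = diag(1,…,1,−1,…,−1)` with `p` entries `+1`
followed by `q = n - p` entries `−1`. -/
def eta (p : ℕ) {n : ℕ} (a b : Fin n) : ℤ :=
  if a = b then (if (a : ℕ) < p then 1 else -1) else 0

/-! For standard basis monomials, `e^S e^T = c • e^{S ∆ T}` with `c ∈ ℤ`: move each generator of
`S` into place through `T`, anticommuting past the others and contracting squares to scalars.
Hence the volume coefficient of `e^S e^T` vanishes unless `S` and `T` are complementary, and then
`e^S e^T = (-1)^{|S||T|} e^T e^S` where `|S| + |T| = n` is odd, so `|S||T|` is even. Bilinearity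
extends the identity from basis elements to all `U, V`. -/

open Finset
open scoped symmDiff

lemma Finset.insert_eq_singleton_symmDiff {α : Type*} [DecidableEq α] {a : α} {s : Finset α}
    (h : a ∉ s) : insert a s = {a} ∆ s := by
  rw [(disjoint_singleton_left.mpr h).symmDiff_eq_sup, sup_eq_union, insert_eq]

section CliffProd

variable {n : ℕ} {A : Type*} [Ring A] (e : Fin n → A)

lemma cliffProd_empty : cliffProd e ∅ = 1 := by simp [cliffProd]

lemma cliffProd_singleton (a : Fin n) : cliffProd e {a} = e a := by simp [cliffProd]

lemma cliffProd_insert_of_lt {a : Fin n} {s : Finset (Fin n)} (ha : ∀ x ∈ s, a < x) :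
    cliffProd e (insert a s) = e a * cliffProd e s := by
  have has : a ∉ s := fun h => lt_irrefl a (ha a h)
  rw [cliffProd, sort_insert _ (fun x hx => (ha x hx).le) has, List.map_cons, List.prod_cons,
    cliffProd]

variable {e} (hanti : Pairwise fun a b => e a * e b = -(e b * e a))
include hanti

lemma mul_prod_map_of_anticomm {a : Fin n} :
    ∀ {l : List (Fin n)}, a ∉ l →
      e a * (l.map e).prod = (-1 : ℤ) ^ l.length • ((l.map e).prod * e a)
  | [], _ => by simp
  | b :: l, h => by
    rw [List.mem_cons, not_or] at h
    rw [List.map_cons, List.prod_cons, ← mul_assoc, hanti h.1, neg_mul, mul_assoc,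
      mul_prod_map_of_anticomm h.2, mul_smul_comm, ← mul_assoc, List.length_cons, pow_succ,
      mul_neg_one, neg_smul]

lemma prod_map_mul_prod_map_of_anticomm :
    ∀ {l m : List (Fin n)}, (∀ x ∈ l, x ∉ m) →
      (l.map e).prod * (m.map e).prod
        = (-1 : ℤ) ^ (l.length * m.length) • ((m.map e).prod * (l.map e).prod)
  | [], m, _ => by simp
  | a :: l, m, h => by
    rw [List.forall_mem_cons] at h
    rw [List.map_cons, List.prod_cons, mul_assoc, prod_map_mul_prod_map_of_anticomm h.2,
      mul_smul_comm, ← mul_assoc, mul_prod_map_of_anticomm hanti h.1, smul_mul_assoc, smul_smul,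
      mul_assoc, ← pow_add, List.length_cons, add_one_mul, add_comm]

lemma cliffProd_mul_cliffProd_of_disjoint {s t : Finset (Fin n)} (hst : Disjoint s t) :
    cliffProd e s * cliffProd e t = (-1 : ℤ) ^ (#s * #t) • (cliffProd e t * cliffProd e s) := by
  simpa only [cliffProd, length_sort] using prod_map_mul_prod_map_of_anticomm hanti
    (l := s.sort (· ≤ ·)) (m := t.sort (· ≤ ·))
    (fun x hx hx' => disjoint_left.mp hst ((mem_sort _).mp hx) ((mem_sort _).mp hx'))

lemma cliffProd_mul_cliffProd_comm_of_symmDiff_eq_univ (hodd : Odd n) {s t : Finset (Fin n)}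
    (hst : s ∆ t = univ) : cliffProd e s * cliffProd e t = cliffProd e t * cliffProd e s := by
  have hdisj : Disjoint s t := disjoint_left.mpr fun x hs ht => by
    have hx : x ∈ s ∆ t := hst ▸ mem_univ x
    simp [mem_symmDiff, hs, ht] at hx
  have hcard : Odd (#s + #t) := by
    rwa [← card_union_of_disjoint hdisj, ← sup_eq_union, ← hdisj.symmDiff_eq_sup, hst, card_univ,
      Fintype.card_fin]
  have heven : Even (#s * #t) := by
    rcases Nat.even_or_odd #s with hs | hs
    · exact hs.mul_right _
    · exact (Nat.odd_add.mp hcard |>.mp hs).mul_left _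
  rw [cliffProd_mul_cliffProd_of_disjoint hanti hdisj, heven.neg_one_pow, one_smul]

variable (hsq : ∀ a, ∃ c : ℤ, e a * e a = c)
include hsq

lemma exists_mul_cliffProd_eq_zsmul (a : Fin n) (t : Finset (Fin n)) :
    ∃ c : ℤ, e a * cliffProd e t = c • cliffProd e ({a} ∆ t) := by
  induction t using Finset.induction_on_min with
  | empty =>
    refine ⟨1, ?_⟩
    rw [one_smul, ← bot_eq_empty, symmDiff_bot, bot_eq_empty, cliffProd_empty, mul_one,
      cliffProd_singleton]
  | insert b t hb ih =>
    have hbt : b ∉ t := fun h => lt_irrefl b (hb b h)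
    rcases lt_trichotomy a b with hab | rfl | hab
    · have hat : a ∉ insert b t := by
        simpa [mem_insert, hab.ne] using fun h => (hab.trans (hb a h)).false
      refine ⟨1, ?_⟩
      rw [one_smul, ← insert_eq_singleton_symmDiff hat, cliffProd_insert_of_lt e (s := insert b t)]
      simpa [mem_insert] using ⟨hab, fun x hx => hab.trans (hb x hx)⟩
    · obtain ⟨c, hc⟩ := hsq a
      refine ⟨c, ?_⟩
      rw [cliffProd_insert_of_lt e hb, ← mul_assoc, hc, ← zsmul_eq_mul,
        insert_eq_singleton_symmDiff hbt, symmDiff_symmDiff_cancel_left]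
    · obtain ⟨c, hc⟩ := ih
      have hbt' : ∀ x ∈ {a} ∆ t, b < x := by
        intro x hx
        rcases mem_symmDiff.mp hx with ⟨hx, -⟩ | ⟨hx, -⟩
        · exact mem_singleton.mp hx ▸ hab
        · exact hb x hx
      refine ⟨-c, ?_⟩
      rw [cliffProd_insert_of_lt e hb, ← mul_assoc, hanti hab.ne', neg_mul, mul_assoc, hc,
        mul_smul_comm, ← cliffProd_insert_of_lt e hbt', neg_smul,
        insert_eq_singleton_symmDiff (fun h => lt_irrefl b (hbt' b h)), symmDiff_left_comm,
        ← insert_eq_singleton_symmDiff hbt]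

lemma exists_cliffProd_mul_cliffProd_eq_zsmul (s t : Finset (Fin n)) :
    ∃ c : ℤ, cliffProd e s * cliffProd e t = c • cliffProd e (s ∆ t) := by
  induction s using Finset.induction_on_min with
  | empty => exact ⟨1, by rw [cliffProd_empty, one_mul, one_smul, ← bot_eq_empty, bot_symmDiff]⟩
  | insert a s ha ih =>
    obtain ⟨c, hc⟩ := ih
    obtain ⟨c', hc'⟩ := exists_mul_cliffProd_eq_zsmul hanti hsq a (s ∆ t)
    refine ⟨c * c', ?_⟩
    rw [cliffProd_insert_of_lt e ha, mul_assoc, hc, mul_smul_comm, hc', smul_smul,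
      ← symmDiff_assoc, ← insert_eq_singleton_symmDiff (fun h => lt_irrefl a (ha a h))]

end CliffProd

theorem Module.Basis.repr_mul_comm {ι R A : Type*} [CommSemiring R] [Semiring A] [Algebra R A]
    (b : Module.Basis ι R A) (i : ι) (h : ∀ j k, b.repr (b j * b k) i = b.repr (b k * b j) i)
    (U V : A) : b.repr (U * V) i = b.repr (V * U) i := by
  have hB := LinearMap.ext_basis b b (B := (LinearMap.mul R A).compr₂ (b.coord i))
    (B' := (LinearMap.mul R A).flip.compr₂ (b.coord i)) (by simpa using h)
  simpa using LinearMap.congr_fun₂ hB U V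

lemma repr_cliffProd_mul_cliffProd_univ_comm {n : ℕ} (hodd : Odd n) {R A : Type*} [Ring R]
    [Ring A] [Module R A] {e : Fin n → A} (hanti : Pairwise fun a b => e a * e b = -(e b * e a))
    (hsq : ∀ a, ∃ c : ℤ, e a * e a = c) (b : Module.Basis (Finset (Fin n)) R A)
    (hb : ∀ s, b s = cliffProd e s) (s t : Finset (Fin n)) :
    b.repr (b s * b t) univ = b.repr (b t * b s) univ := by
  simp only [hb]
  by_cases hst : s ∆ t = univ
  · rw [cliffProd_mul_cliffProd_comm_of_symmDiff_eq_univ hanti hodd hst]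
  · have hts : t ∆ s ≠ univ := by rwa [symmDiff_comm]
    obtain ⟨c, hc⟩ := exists_cliffProd_mul_cliffProd_eq_zsmul hanti hsq s t
    obtain ⟨c', hc'⟩ := exists_cliffProd_mul_cliffProd_eq_zsmul hanti hsq t s
    rw [hc, hc', ← hb, ← hb, map_zsmul, map_zsmul, b.repr_self, b.repr_self,
      Finsupp.smul_apply, Finsupp.smul_apply, Finsupp.single_eq_of_ne' hst,
      Finsupp.single_eq_of_ne' hts, smul_zero, smul_zero]

theorem stmt3_general (p n : ℕ) (hodd : Odd n)
    {A : Type*} [Ring A] [Algebra ℝ A]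
    (e : Fin n → A)
    (hrele : ∀ a b : Fin n, e a * e b + e b * e a = ((2 * eta p a b : ℤ) : A))
    (bE : Module.Basis (Finset (Fin n)) ℝ A)
    (hbE : ∀ s, bE s = cliffProd e s)
    (U V : A) :
    bE.repr (U * V) Finset.univ = bE.repr (V * U) Finset.univ := by
  have hanti : Pairwise fun a b => e a * e b = -(e b * e a) := fun a b hab =>
    eq_neg_of_add_eq_zero_left (by simpa [eta, hab] using hrele a b)
  have hsq : ∀ a, ∃ c : ℤ, e a * e a = c := fun a => ⟨eta p a a, by
    apply smul_right_injective A (two_ne_zero : (2 : ℝ) ≠ 0)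
    simp only [two_smul, hrele a a]
    push_cast
    exact two_mul _⟩
  exact bE.repr_mul_comm _ (repr_cliffProd_mul_cliffProd_univ_comm hodd hanti hsq bE hbE) U V

/-- In the real Clifford algebra `Cl(p,q)` of odd dimension `n = p + q`, for any two
elements `U, V`, the coefficient of the volume element `e^{1…n}` in `U*V` equals the one
in `V*U`: `π(UV) = π(VU)`. Here `bE` is the standard basis `{e^A}` and the coefficient of
`e^{1…n}` is the `repr` coordinate at the full multi-index `Finset.univ`. -/
theorem stmt3 (p q n : ℕ) (hn : n = p + q) (hodd : Odd n)
    {A : Type*} [Ring A] [Algebra ℝ A]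
    (e : Fin n → A)
    (hrele : ∀ a b : Fin n, e a * e b + e b * e a = ((2 * eta p a b : ℤ) : A))
    (bE : Module.Basis (Finset (Fin n)) ℝ A)
    (hbE : ∀ s, bE s = cliffProd e s)
    (U V : A) :
    bE.repr (U * V) Finset.univ = bE.repr (V * U) Finset.univ :=
  stmt3_general p n hodd e hrele bE hbE U V
end

section
/- Let γ^1,...,γ^n ∈ Cl(p,q) satisfy γ^a γ^b + γ^b γ^a = 2η^{ab}e with n = p+q odd. Then π(γ^{a_1}···γ^{a_k}) = 0 for every ordered multi-index of length 1 ≤ k ≤ n−1, where π projects onto the coefficient of the volume element e^{1...n}. -/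
theorem mul_list_prod_of_anticomm {ι A : Type*} [DecidableEq ι] [Ring A] {g : ι → A}
    (hg : ∀ a b, a ≠ b → g a * g b = -(g b * g a)) (a : ι) (l : List ι) :
    g a * (l.map g).prod = (-1 : ℤ) ^ l.countP (· ≠ a) • ((l.map g).prod * g a) := by
  induction l with
  | nil => simp
  | cons b l ih =>
    simp only [List.map_cons, List.prod_cons, List.countP_cons]
    by_cases hab : b = a
    · subst hab
      rw [decide_eq_false (not_not_intro rfl), if_neg Bool.false_ne_true, add_zero]
      conv_lhs => rw [ih, mul_smul_comm, ← mul_assoc]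
    · rw [decide_eq_true hab, if_pos rfl, pow_succ, mul_neg_one, neg_smul, ← mul_assoc,
        hg a b (Ne.symm hab), neg_mul, mul_assoc, ih, mul_smul_comm, ← mul_assoc]

theorem mul_cliffProd_of_anticomm {n : ℕ} {A : Type*} [Ring A] {g : Fin n → A}
    (hg : ∀ a b, a ≠ b → g a * g b = -(g b * g a)) (a : Fin n) (s : Finset (Fin n)) :
    g a * cliffProd g s = (-1 : ℤ) ^ (s.erase a).card • (cliffProd g s * g a) := by
  have hcount : (s.sort (· ≤ ·)).countP (· ≠ a) = (s.erase a).card := by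
    rw [← Finset.filter_ne', Finset.card_def, Finset.filter_val, ← Multiset.countP_eq_card_filter,
      ← Finset.sort_eq s (· ≤ ·), Multiset.coe_countP]
  rw [cliffProd, mul_list_prod_of_anticomm hg, hcount]

theorem Finset.exists_odd_card_erase {α : Type*} [DecidableEq α] [Fintype α] {s : Finset α}
    (hs : s.Nonempty) (hs' : s ≠ univ) : ∃ a, Odd (s.erase a).card := by
  rcases Nat.even_or_odd s.card with h | h
  · obtain ⟨a, ha⟩ := hs
    refine ⟨a, ?_⟩
    rw [card_erase_of_mem ha]
    exact Nat.Even.sub_odd (card_pos.2 ⟨a, ha⟩) h odd_one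
  · obtain ⟨a, ha⟩ := not_forall.1 (mt eq_univ_iff_forall.2 hs')
    exact ⟨a, by rwa [erase_eq_of_notMem ha]⟩

theorem eta_of_ne (p : ℕ) {n : ℕ} {a b : Fin n} (h : a ≠ b) : eta p a b = 0 := if_neg h

theorem eta_self_mul_self (p : ℕ) {n : ℕ} (a : Fin n) : eta p a a * eta p a a = 1 := by
  unfold eta
  split_ifs <;> simp_all

section CliffordRelations

variable {n : ℕ} {A : Type*} [Ring A] {p : ℕ} {g : Fin n → A}
  (hg : ∀ a b, g a * g b + g b * g a = ((2 * eta p a b : ℤ) : A))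
include hg

theorem anticomm_of_clifford {a b : Fin n} (hab : a ≠ b) : g a * g b = -(g b * g a) :=
  eq_neg_of_add_eq_zero_left (by simpa [eta_of_ne p hab] using hg a b)

theorem mul_self_of_clifford [IsAddTorsionFree A] (a : Fin n) :
    g a * g a = ((eta p a a : ℤ) : A) := by
  apply nsmul_right_injective two_ne_zero
  simpa [two_nsmul, two_mul] using hg a a

end CliffordRelations

section VolumeCoefficient

variable {F A : Type*} [CommRing F] [Ring A] [Algebra F A] {n p : ℕ}
  (bE : Module.Basis (Finset (Fin n)) F A) {e : Fin n → A} (hbE : ∀ s, bE s = cliffProd e s)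
  (he : ∀ a b, a ≠ b → e a * e b = -(e b * e a))
  (hesq : ∀ a, e a * e a = ((eta p a a : ℤ) : A)) (hodd : Odd n)
include hbE he hesq hodd

theorem coord_univ_mul_mul_self (a : Fin n) (x : A) :
    bE.coord Finset.univ (e a * x * e a) = eta p a a • bE.coord Finset.univ x := by
  rw [mul_assoc]
  refine LinearMap.congr_fun (f := (bE.coord Finset.univ).comp
    ((LinearMap.mulLeft F (e a)).comp (LinearMap.mulRight F (e a))))
    (g := eta p a a • bE.coord Finset.univ) (bE.ext fun t => ?_) x
  have hconj : e a * (bE t * e a) = ((-1 : ℤ) ^ (t.erase a).card * eta p a a) • bE t := by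
    rw [← mul_assoc, hbE, mul_cliffProd_of_anticomm he, smul_mul_assoc, mul_assoc, hesq,
      ← (Int.cast_commute _ _).eq, ← zsmul_eq_mul, smul_smul]
  simp only [LinearMap.comp_apply, LinearMap.mulLeft_apply, LinearMap.mulRight_apply,
    LinearMap.smul_apply, hconj, map_zsmul, Module.Basis.coord_apply, Module.Basis.repr_self,
    Finsupp.single_apply]
  split_ifs with ht
  · subst ht
    have heven : Even (Finset.univ.erase a).card := by
      rw [Finset.card_erase_of_mem (Finset.mem_univ a), Finset.card_univ, Fintype.card_fin]
      exact Nat.Odd.sub_odd hodd odd_one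
    rw [heven.neg_one_pow, one_mul]
  · simp

theorem coord_univ_gen_mul_comm (a : Fin n) (y : A) :
    bE.coord Finset.univ (e a * y) = bE.coord Finset.univ (y * e a) := by
  have h := coord_univ_mul_mul_self bE hbE he hesq hodd a (y * e a)
  rw [← mul_assoc, mul_assoc _ (e a), hesq, ← zsmul_eq_mul', map_zsmul] at h
  have h' := congrArg (eta p a a • ·) h
  simpa only [smul_smul, eta_self_mul_self, one_smul] using h'

theorem coord_univ_mul_comm (u v : A) :
    bE.coord Finset.univ (u * v) = bE.coord Finset.univ (v * u) := by
  suffices hprod : ∀ (l : List (Fin n)) (v : A), bE.coord Finset.univ ((l.map e).prod * v) =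
      bE.coord Finset.univ (v * (l.map e).prod) by
    refine LinearMap.congr_fun (f := (bE.coord Finset.univ).comp (LinearMap.mulRight F v))
      (g := (bE.coord Finset.univ).comp (LinearMap.mulLeft F v)) (bE.ext fun t => ?_) u
    simpa [hbE, cliffProd] using hprod _ v
  intro l
  induction l with
  | nil => simp
  | cons a l ih =>
    intro v
    simp only [List.map_cons, List.prod_cons]
    rw [mul_assoc, coord_univ_gen_mul_comm bE hbE he hesq hodd, mul_assoc, ih, mul_assoc]

theorem coord_univ_eq_zero_of_anticomm [IsAddTorsionFree F] {w u : A} (hwu : w * u = -(u * w))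
    {c : ℤ} (hc : c * c = 1) (hw : w * w = c) : bE.coord Finset.univ u = 0 := by
  have h := coord_univ_mul_comm bE hbE he hesq hodd w (u * w)
  rw [← mul_assoc, hwu, neg_mul, map_neg, neg_eq_self, mul_assoc, hw,
    ← zsmul_eq_mul', map_zsmul] at h
  have h' := congrArg (c • ·) h
  simpa only [smul_smul, hc, one_smul, smul_zero] using h'

end VolumeCoefficient

theorem stmt6_general {F : Type*} [RCLike F] (p n : ℕ) (hodd : Odd n)
    {A : Type*} [Ring A] [Algebra F A]
    (e : Fin n → A)
    (hrele : ∀ a b : Fin n, e a * e b + e b * e a = ((2 * eta p a b : ℤ) : A))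
    (bE : Module.Basis (Finset (Fin n)) F A)
    (hbE : ∀ s, bE s = cliffProd e s)
    (γ : Fin n → A)
    (hrel : ∀ a b : Fin n, γ a * γ b + γ b * γ a = ((2 * eta p a b : ℤ) : A))
    (s : Finset (Fin n)) (hs1 : 1 ≤ s.card) (hs2 : s.card ≤ n - 1) :
    bE.repr (cliffProd γ s) Finset.univ = 0 := by
  have : IsAddTorsionFree A := .of_isTorsionFree F A
  have hs_ne_univ : s ≠ Finset.univ := by
    rintro rfl
    rw [Finset.card_univ, Fintype.card_fin] at hs2
    have := hodd.pos
    omega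
  obtain ⟨a, ha⟩ := Finset.exists_odd_card_erase (Finset.card_pos.1 hs1) hs_ne_univ
  have hanti : γ a * cliffProd γ s = -(cliffProd γ s * γ a) := by
    rw [mul_cliffProd_of_anticomm (fun _ _ => anticomm_of_clifford hrel), ha.neg_one_pow,
      neg_one_zsmul]
  exact coord_univ_eq_zero_of_anticomm bE hbE (fun _ _ => anticomm_of_clifford hrele)
    (mul_self_of_clifford hrele) hodd hanti (eta_self_mul_self p a) (mul_self_of_clifford hrel a)

/-- Let `γ^1,…,γ^n ∈ Cl(p,q)` satisfy the Clifford relations, with `n = p + q` odd.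
Then `π(γ^A) = 0` for every ordered multi-index of length `1 ≤ |A| ≤ n − 1`, where `π`
is the coefficient of the volume element `e^{1…n}` in the standard basis `{e^A}`. -/
theorem stmt6 {F : Type*} [RCLike F] (p q n : ℕ) (hn : n = p + q) (hodd : Odd n)
    {A : Type*} [Ring A] [Algebra F A]
    (e : Fin n → A)
    (hrele : ∀ a b : Fin n, e a * e b + e b * e a = ((2 * eta p a b : ℤ) : A))
    (bE : Module.Basis (Finset (Fin n)) F A)
    (hbE : ∀ s, bE s = cliffProd e s)
    (γ : Fin n → A)
    (hrel : ∀ a b : Fin n, γ a * γ b + γ b * γ a = ((2 * eta p a b : ℤ) : A))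
    (s : Finset (Fin n)) (hs1 : 1 ≤ s.card) (hs2 : s.card ≤ n - 1) :
    bE.repr (cliffProd γ s) Finset.univ = 0 :=
  stmt6_general p n hodd e hrele bE hbE γ hrel s hs1 hs2
end

section
/- Let γ^a and β^a (a=1,...,n) each satisfy the Clifford relations in Cl(p,q), n even, with β^{1...n} ≠ −γ^{1...n}. Then there exists a multi-index B with |B| even such that H(γ^B) = (1/2^n) ∑_A β^A γ^B (γ^A)^{-1} ≠ 0. -/
/-- The generalized Reynolds operator `H(U) = 2⁻ⁿ ∑_A β^A U (γ^A)⁻¹`. -/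
noncomputable def genH (F : Type*) [RCLike F] {n : ℕ} {A : Type*} [Ring A] [Algebra F A]
    (β γ : Fin n → A) (U : A) : A :=
  ((2 : F) ^ n)⁻¹ • ∑ s : Finset (Fin n), cliffProd β s * U * Ring.inverse (cliffProd γ s)

/-! For a multi-index `t` of even length, conjugation by `γ^t` multiplies `(γ^s)⁻¹` by the
sign `(-1)^|t ∩ s|`, so `H(γ^t) (γ^t)⁻¹ = 2⁻ⁿ ∑_s (-1)^|t ∩ s| β^s (γ^s)⁻¹`. Summed over all even
`t`, the character sum `∑_{|t| even} (-1)^|t ∩ s|` equals `2ⁿ⁻¹` for `s = ∅` and for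
`s = {1,…,n}` and vanishes otherwise, whence
`2 ∑_{|t| even} H(γ^t) (γ^t)⁻¹ = 1 + β^{1…n} (γ^{1…n})⁻¹`.
If all `H(γ^t)` with `|t|` even vanished, this would force `β^{1…n} = -γ^{1…n}`. -/

open Finset

section SignSums

variable {ι : Type*} [Fintype ι] [DecidableEq ι]

theorem sum_neg_one_pow_card_inter (s : Finset ι) :
    ∑ t : Finset ι, (-1 : ℤ) ^ #(t ∩ s) = if s = ∅ then 2 ^ Fintype.card ι else 0 := by
  have hprod : ∑ t : Finset ι, (-1 : ℤ) ^ #(t ∩ s)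
      = ∏ a, (1 + if a ∈ s then -1 else 1) := by
    simp only [prod_one_add, powerset_univ, prod_ite_mem, prod_const]
  rw [hprod]
  split_ifs with hs
  · simp [hs, card_univ]
  · obtain ⟨a, ha⟩ := nonempty_iff_ne_empty.mpr hs
    exact prod_eq_zero (mem_univ a) (by simp [ha])

-- Doubled to avoid `2 ^ (card ι - 1)`; for empty `ι` the two summands both count `s = ∅ = univ`.
theorem two_mul_sum_even_neg_one_pow_card_inter (s : Finset ι) :
    2 * ∑ t with Even #t, (-1 : ℤ) ^ #(t ∩ s)
      = (if s = ∅ then 2 ^ Fintype.card ι else 0)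
        + (if s = univ then 2 ^ Fintype.card ι else 0) := by
  have hparity : ∀ t : Finset ι, (-1 : ℤ) ^ #t * (-1) ^ #(t ∩ s) = (-1) ^ #(t ∩ sᶜ) := by
    intro t
    rw [← card_inter_add_card_sdiff t s, sdiff_eq_inter_compl, ← pow_add,
      show #(t ∩ s) + #(t ∩ sᶜ) + #(t ∩ s) = 2 * #(t ∩ s) + #(t ∩ sᶜ) by ring, pow_add, pow_mul]
    simp
  calc 2 * ∑ t with Even #t, (-1 : ℤ) ^ #(t ∩ s)
      = ∑ t : Finset ι, (1 + (-1) ^ #t) * (-1 : ℤ) ^ #(t ∩ s) := by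
        rw [mul_sum, sum_filter]
        refine sum_congr rfl fun t _ => ?_
        rcases Nat.even_or_odd #t with h | h
        · rw [if_pos h, h.neg_one_pow]; ring
        · rw [if_neg (Nat.not_even_iff_odd.mpr h), h.neg_one_pow]; ring
    _ = ∑ t : Finset ι, (-1 : ℤ) ^ #(t ∩ s) + ∑ t : Finset ι, (-1 : ℤ) ^ #(t ∩ sᶜ) := by
        simp only [add_mul, one_mul, hparity, sum_add_distrib]
    _ = _ := by simp only [sum_neg_one_pow_card_inter, compl_eq_empty_iff]

end SignSums

section Commutation

variable {ι A : Type*} [Ring A] {γ : ι → A} {ε : ι → ι → ℤ}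

theorem mul_prod_map_eq_zsmul (hε : ∀ a b, γ a * γ b = ε a b • (γ b * γ a)) (a : ι)
    (l : List ι) : γ a * (l.map γ).prod = (l.map (ε a)).prod • ((l.map γ).prod * γ a) := by
  induction l with
  | nil => simp
  | cons b l ih =>
    simp only [List.map_cons, List.prod_cons]
    rw [← mul_assoc, hε, smul_mul_assoc, mul_assoc, ih, mul_smul_comm, smul_smul, mul_assoc]

theorem prod_map_mul_prod_map_eq_zsmul (hε : ∀ a b, γ a * γ b = ε a b • (γ b * γ a))
    (l m : List ι) :
    (l.map γ).prod * (m.map γ).prod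
      = (l.map fun a => (m.map (ε a)).prod).prod • ((m.map γ).prod * (l.map γ).prod) := by
  induction l with
  | nil => simp
  | cons a l ih =>
    simp only [List.map_cons, List.prod_cons]
    rw [mul_assoc, ih, mul_smul_comm, ← mul_assoc, mul_prod_map_eq_zsmul hε, smul_mul_assoc,
      smul_smul, mul_assoc, mul_comm]

end Commutation

theorem Finset.prod_map_sort {α M : Type*} [LinearOrder α] [CommMonoid M] (s : Finset α)
    (f : α → M) : ((s.sort (· ≤ ·)).map f).prod = ∏ a ∈ s, f a := by
  rw [prod_eq_multiset_prod, ← sort_eq s (· ≤ ·)]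
  rfl

theorem mul_inverse_mul_inverse_of_mul_eq_zsmul {A : Type*} [Ring A] {u v : A} {w : ℤ}
    (hu : IsUnit u) (hv : IsUnit v) (hw : w * w = 1) (huv : u * v = w • (v * u)) :
    u * Ring.inverse v * Ring.inverse u = w • Ring.inverse v := by
  have hvu : v * u = w • (u * v) := by rw [huv, smul_smul, hw, one_smul]
  calc u * Ring.inverse v * Ring.inverse u
      = Ring.inverse v * (v * u) * Ring.inverse v * Ring.inverse u := by
        rw [← mul_assoc, Ring.inverse_mul_cancel v hv, one_mul]
    _ = w • (Ring.inverse v * u * (v * Ring.inverse v) * Ring.inverse u) := by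
        rw [hvu, mul_smul_comm, smul_mul_assoc, smul_mul_assoc]
        simp only [mul_assoc]
    _ = w • Ring.inverse v := by
        rw [Ring.mul_inverse_cancel v hv, mul_one, mul_assoc, Ring.mul_inverse_cancel u hu,
          mul_one]

theorem isUnit_of_mul_self_add_mul_self {A : Type*} [Ring A] (h2 : IsUnit (2 : A)) {x : A}
    {d : ℤ} (hd : IsUnit d) (hx : x * x + x * x = ((2 * d : ℤ) : A)) : IsUnit x := by
  have hsq : x * x = d := h2.mul_left_cancel <| by push_cast at hx; rw [two_mul, hx]
  exact isUnit_mul_self_iff.mp (hsq ▸ hd.map (Int.castRingHom A))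

theorem isUnit_eta_self (p : ℕ) {n : ℕ} (a : Fin n) : IsUnit (eta p a a) := by
  simp only [eta, if_true]
  split_ifs <;> simp

section Anticommuting

variable {n : ℕ} {A : Type*} [Ring A] {γ : Fin n → A}

theorem isUnit_cliffProd (hunit : ∀ a, IsUnit (γ a)) (s : Finset (Fin n)) :
    IsUnit (cliffProd γ s) :=
  List.prod_isUnit fun _ hx => by
    obtain ⟨a, -, rfl⟩ := List.mem_map.mp hx
    exact hunit a

theorem cliffProd_mul_cliffProd_of_even (hanti : ∀ a b, a ≠ b → γ a * γ b = -(γ b * γ a))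
    {s t : Finset (Fin n)} (ht : Even #t) :
    cliffProd γ t * cliffProd γ s = (-1 : ℤ) ^ #(t ∩ s) • (cliffProd γ s * cliffProd γ t) := by
  have hε : ∀ a b, γ a * γ b = (if a = b then 1 else -1 : ℤ) • (γ b * γ a) := by
    intro a b
    split_ifs with hab
    · rw [hab, one_smul]
    · rw [hanti a b hab, neg_one_smul]
  -- the product is `(-1) ^ (#t * #s + #(t ∩ s))`
  have hsign : ∏ a ∈ t, ∏ b ∈ s, (if a = b then 1 else -1 : ℤ) = (-1) ^ #(t ∩ s) := by
    have hsplit : ∀ a b : Fin n, (if a = b then 1 else -1 : ℤ) = -1 * if a = b then -1 else 1 := by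
      intro a b; split_ifs <;> norm_num
    simp only [hsplit, prod_mul_distrib, prod_const, prod_ite_eq, ← pow_mul, prod_ite_mem,
      (ht.mul_left #s).neg_one_pow, one_mul]
  unfold cliffProd
  rw [prod_map_mul_prod_map_eq_zsmul hε]
  simp only [prod_map_sort, hsign]

theorem cliffProd_mul_inverse_mul_inverse_of_even (hanti : ∀ a b, a ≠ b → γ a * γ b = -(γ b * γ a))
    (hunit : ∀ a, IsUnit (γ a)) (s : Finset (Fin n)) {t : Finset (Fin n)} (ht : Even #t) :
    cliffProd γ t * Ring.inverse (cliffProd γ s) * Ring.inverse (cliffProd γ t)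
      = (-1 : ℤ) ^ #(t ∩ s) • Ring.inverse (cliffProd γ s) :=
  mul_inverse_mul_inverse_of_mul_eq_zsmul (isUnit_cliffProd hunit t) (isUnit_cliffProd hunit s)
    (by rw [← mul_pow]; norm_num) (cliffProd_mul_cliffProd_of_even hanti ht)

end Anticommuting

section Reynolds

variable {F : Type*} [RCLike F] {n : ℕ} {A : Type*} [Ring A] [Algebra F A] {β γ : Fin n → A}

theorem genH_cliffProd_mul_inverse (hanti : ∀ a b, a ≠ b → γ a * γ b = -(γ b * γ a))
    (hunit : ∀ a, IsUnit (γ a)) {t : Finset (Fin n)} (ht : Even #t) :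
    genH F β γ (cliffProd γ t) * Ring.inverse (cliffProd γ t)
      = ((2 : F) ^ n)⁻¹ • ∑ s, (-1 : ℤ) ^ #(t ∩ s) •
          (cliffProd β s * Ring.inverse (cliffProd γ s)) := by
  rw [genH, smul_mul_assoc, sum_mul]
  congr 1
  refine sum_congr rfl fun s _ => ?_
  rw [mul_assoc, mul_assoc, ← mul_assoc (cliffProd γ t),
    cliffProd_mul_inverse_mul_inverse_of_even hanti hunit s ht, mul_smul_comm]

theorem two_smul_sum_genH_cliffProd_mul_inverse
    (hanti : ∀ a b, a ≠ b → γ a * γ b = -(γ b * γ a)) (hunit : ∀ a, IsUnit (γ a)) :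
    (2 : ℤ) • ∑ t with Even #t, genH F β γ (cliffProd γ t) * Ring.inverse (cliffProd γ t)
      = 1 + cliffProd β univ * Ring.inverse (cliffProd γ univ) := by
  set X : Finset (Fin n) → A := fun s => cliffProd β s * Ring.inverse (cliffProd γ s)
  have hX : X ∅ = 1 := by simp [X, cliffProd]
  have hcancel : ∀ x : A, ((2 : F) ^ n)⁻¹ • ((2 : ℤ) ^ n • x) = x := fun x => by
    rw [← Int.cast_smul_eq_zsmul F, smul_smul]
    simp
  calc (2 : ℤ) • ∑ t with Even #t, genH F β γ (cliffProd γ t) * Ring.inverse (cliffProd γ t)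
      = (2 : ℤ) • ∑ t with Even #t, ((2 : F) ^ n)⁻¹ • ∑ s, (-1 : ℤ) ^ #(t ∩ s) • X s :=
        congrArg _ <| sum_congr rfl fun t ht =>
          genH_cliffProd_mul_inverse hanti hunit (mem_filter.mp ht).2
    _ = ((2 : F) ^ n)⁻¹ • ∑ s, (2 * ∑ t with Even #t, (-1 : ℤ) ^ #(t ∩ s)) • X s := by
        rw [← smul_sum, sum_comm, smul_comm, smul_sum]
        simp only [sum_smul, mul_smul]
    _ = ((2 : F) ^ n)⁻¹ • ((2 : ℤ) ^ n • X ∅ + (2 : ℤ) ^ n • X univ) := by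
        simp only [two_mul_sum_even_neg_one_pow_card_inter, Fintype.card_fin, add_smul, ite_smul,
          zero_smul, sum_add_distrib, sum_ite_eq', mem_univ, if_true]
    _ = 1 + X univ := by rw [smul_add, hcancel, hcancel, hX]

end Reynolds

theorem stmt15_general {F : Type*} [RCLike F] (p n : ℕ)
    {A : Type*} [Ring A] [Algebra F A]
    (γ β : Fin n → A)
    (hγ : ∀ a b : Fin n, γ a * γ b + γ b * γ a = ((2 * eta p a b : ℤ) : A))
    (hvol : cliffProd β Finset.univ ≠ -cliffProd γ Finset.univ) :
    ∃ t : Finset (Fin n), Even t.card ∧ genH F β γ (cliffProd γ t) ≠ 0 := by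
  have hanti : ∀ a b, a ≠ b → γ a * γ b = -(γ b * γ a) := fun a b hab =>
    eq_neg_of_add_eq_zero_left (by simpa [eta, hab] using hγ a b)
  have h2 : IsUnit (2 : A) :=
    map_ofNat (algebraMap F A) 2 ▸ (IsUnit.mk0 (2 : F) two_ne_zero).map (algebraMap F A)
  have hunit : ∀ a, IsUnit (γ a) := fun a =>
    isUnit_of_mul_self_add_mul_self h2 (isUnit_eta_self p a) (hγ a a)
  by_contra! hcon
  have hsum := two_smul_sum_genH_cliffProd_mul_inverse (F := F) (β := β) hanti hunit
  rw [sum_eq_zero fun t ht => by rw [hcon t (mem_filter.mp ht).2, zero_mul], smul_zero] at hsum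
  apply hvol
  calc cliffProd β univ
      = cliffProd β univ * Ring.inverse (cliffProd γ univ) * cliffProd γ univ := by
        rw [mul_assoc, Ring.inverse_mul_cancel _ (isUnit_cliffProd hunit univ), mul_one]
    _ = -cliffProd γ univ := by rw [eq_neg_of_add_eq_zero_right hsum.symm, neg_one_mul]

/-- Let `γ^a` and `β^a` each satisfy the Clifford relations in `Cl(p,q)` with `n` even and
`β^{1…n} ≠ −γ^{1…n}`. Then there is a multi-index `B` of even length with
`H(γ^B) = 2⁻ⁿ ∑_A β^A γ^B (γ^A)⁻¹ ≠ 0`. -/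
theorem stmt15 {F : Type*} [RCLike F] (p q n : ℕ) (hn : n = p + q) (hne : Even n)
    {A : Type*} [Ring A] [Algebra F A]
    (e : Fin n → A)
    (hrele : ∀ a b : Fin n, e a * e b + e b * e a = ((2 * eta p a b : ℤ) : A))
    (bE : Module.Basis (Finset (Fin n)) F A)
    (hbE : ∀ s, bE s = cliffProd e s)
    (γ β : Fin n → A)
    (hγ : ∀ a b : Fin n, γ a * γ b + γ b * γ a = ((2 * eta p a b : ℤ) : A))
    (hβ : ∀ a b : Fin n, β a * β b + β b * β a = ((2 * eta p a b : ℤ) : A))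
    (hvol : cliffProd β Finset.univ ≠ -cliffProd γ Finset.univ) :
    ∃ t : Finset (Fin n), Even t.card ∧ genH F β γ (cliffProd γ t) ≠ 0 :=
  stmt15_general p n γ β hγ hvol
end

section
/- Uniqueness part of Pauli's theorem, odd case: Let Cl(p,q) have odd dimension n = p+q and let γ^a, β^a satisfy the Clifford relations. If T₁ and T₂ are invertible and γ^a = T₁^{-1} β^a T₁ = T₂^{-1} β^a T₂ for all a = 1,...,n, then T₁ T₂^{-1} lies in the center of Cl(p,q), i.e. T₁ = Z T₂ for some invertible central element Z ∈ span{e, e^{1...n}}. -/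
/-!
`Z = T₁ T₂⁻¹` commutes with every `β a`, and the top product `ω = e^{1…n}` is central because `n`
is odd. The products `β_s` need not span the algebra, but twisting `β` by the involution
`u = c⁻¹ ω β^{1…n}` (with `c` the common scalar square of `ω` and `β^{1…n}`) gives a family
`δ a = u β a` with the same Clifford relations and top product `ω`, still commuting with `Z`.
Conjugation by `δ a` multiplies `δ_s` by `η_a (-1)^{|s \ {a}|}`; for odd `n` these signs determine
`s` up to complement, so projecting onto common eigenspaces reduces any linear relation among the
`δ_s` to one between `δ_t` and `δ_{tᶜ}`, i.e. (after multiplying by `δ_t`) between `1` and `ω`.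
Hence the `δ_s` form a basis and `Z` is central. The same projection, applied to `Z` in the basis
`e_s`, leaves only its components along `1` and `ω`.
-/

open Finset

structure IsCliffordFamily {F A : Type*} [CommSemiring F] [Ring A] [Algebra F A] {n : ℕ}
    (η : Fin n → F) (δ : Fin n → A) : Prop where
  mul_self : ∀ a, δ a * δ a = algebraMap F A (η a)
  anticomm : ∀ a b, a ≠ b → δ a * δ b = -(δ b * δ a)

def cliffProdSq {F : Type*} [CommRing F] {n : ℕ} (η : Fin n → F) (s : Finset (Fin n)) : F :=
  (-1) ^ s.card.choose 2 * ∏ a ∈ s, η a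

theorem even_card_erase_add_card_erase_iff {α : Type*} [DecidableEq α] {s t : Finset α} (a : α) :
    Even ((s.erase a).card + (t.erase a).card) ↔ ((a ∈ s ↔ a ∈ t) ↔ Even (s.card + t.card)) := by
  have hs : a ∈ s → 0 < s.card := fun h => card_pos.2 ⟨a, h⟩
  have ht : a ∈ t → 0 < t.card := fun h => card_pos.2 ⟨a, h⟩
  rw [card_erase_eq_ite, card_erase_eq_ite]
  split_ifs with has hat hat <;>
    simp only [Nat.even_iff, has, hat, not_true_eq_false, iff_true, true_iff,
      iff_false, false_iff, true_implies, false_implies] at hs ht ⊢ <;>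
    omega

theorem commute_of_basis {ι R A : Type*} [CommSemiring R] [Semiring A] [Algebra R A]
    (b : Module.Basis ι R A) {z : A} (h : ∀ i, Commute z (b i)) (x : A) : Commute z x :=
  LinearMap.congr_fun (b.ext (f₁ := LinearMap.mulLeft R z) (f₂ := LinearMap.mulRight R z) h) x

section

variable {F A : Type*} [Field F] [Ring A] [Algebra F A] {n : ℕ}

@[simp]
theorem cliffProd_empty_s17 (δ : Fin n → A) : cliffProd δ ∅ = 1 := by
  simp [cliffProd]

theorem commute_cliffProd_right {z : A} {δ : Fin n → A} (h : ∀ a, Commute z (δ a))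
    (s : Finset (Fin n)) : Commute z (cliffProd δ s) :=
  Commute.list_prod_right _ _ fun _ hx => by
    obtain ⟨a, -, rfl⟩ := List.mem_map.1 hx
    exact h a

theorem cliffProdSq_ne_zero {η : Fin n → F} (hη : ∀ a, η a ≠ 0) (s : Finset (Fin n)) :
    cliffProdSq η s ≠ 0 :=
  mul_ne_zero (pow_ne_zero _ (neg_ne_zero.2 one_ne_zero)) (prod_ne_zero_iff.2 fun a _ => hη a)

theorem forall_even_card_erase_add_card_erase_iff (hodd : Odd n) {s t : Finset (Fin n)} :
    (∀ a, Even ((s.erase a).card + (t.erase a).card)) ↔ s = t ∨ s = tᶜ := by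
  simp only [even_card_erase_add_card_erase_iff]
  constructor
  · intro h
    by_cases hst : Even (s.card + t.card)
    · exact .inl (ext fun a => by simpa [hst] using h a)
    · refine .inr (ext fun a => ?_)
      have := h a
      simp only [hst, iff_false, mem_compl] at this ⊢
      tauto
  · have : Odd (tᶜ.card + t.card) := by
      rwa [card_compl_add_card, Fintype.card_fin]
    rintro (rfl | rfl) a
    · simp
    · simpa [Nat.not_even_iff_odd] using this

namespace IsCliffordFamily

variable {η : Fin n → F} {δ : Fin n → A}

theorem mul_prod_of_notMem (hδ : IsCliffordFamily η δ) {a : Fin n} {l : List (Fin n)}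
    (ha : a ∉ l) : δ a * (l.map δ).prod = (-1 : F) ^ l.length • ((l.map δ).prod * δ a) := by
  induction l with
  | nil => simp
  | cons b t ih =>
    have hab : a ≠ b := fun h => ha (h ▸ List.mem_cons_self)
    rw [List.map_cons, List.prod_cons, ← mul_assoc, hδ.anticomm a b hab, neg_mul, mul_assoc,
      ih (fun h => ha (List.mem_cons_of_mem _ h)), mul_smul_comm, List.length_cons, pow_succ,
      mul_neg_one, neg_smul, mul_assoc]

theorem prod_mul_of_notMem (hδ : IsCliffordFamily η δ) {a : Fin n} {l : List (Fin n)}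
    (ha : a ∉ l) : (l.map δ).prod * δ a = (-1 : F) ^ l.length • (δ a * (l.map δ).prod) := by
  rw [hδ.mul_prod_of_notMem ha, smul_smul, ← mul_pow, neg_one_mul, neg_neg, one_pow, one_smul]

theorem mul_prod_mul (hδ : IsCliffordFamily η δ) (a : Fin n) {l : List (Fin n)}
    (hl : l.Nodup) :
    δ a * (l.map δ).prod * δ a = (η a * (-1) ^ (l.erase a).length) • (l.map δ).prod := by
  induction l with
  | nil => simp [hδ.mul_self, Algebra.algebraMap_eq_smul_one]
  | cons b t ih =>
    obtain ⟨hbt, ht⟩ := List.nodup_cons.1 hl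
    rw [List.map_cons, List.prod_cons]
    by_cases hab : b = a
    · subst hab
      rw [List.erase_cons_head, ← mul_assoc, mul_assoc, hδ.mul_self, hδ.prod_mul_of_notMem hbt,
        mul_smul_comm, ← Algebra.smul_def, smul_smul, mul_comm]
    · rw [List.erase_cons_tail (by simpa using hab), List.length_cons, ← mul_assoc,
        hδ.anticomm a b (Ne.symm hab), neg_mul, neg_mul, mul_assoc, mul_assoc, ← mul_assoc (δ a),
        ih ht, mul_smul_comm, pow_succ, ← mul_assoc, mul_neg_one, neg_smul]

theorem mul_cliffProd_mul (hδ : IsCliffordFamily η δ) (a : Fin n) (s : Finset (Fin n)) :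
    δ a * cliffProd δ s * δ a = (η a * (-1) ^ (s.erase a).card) • cliffProd δ s := by
  simp only [cliffProd, hδ.mul_prod_mul a (s.sort_nodup _), List.length_erase, card_erase_eq_ite,
    mem_sort, length_sort]

theorem prod_mul_self (hδ : IsCliffordFamily η δ) {l : List (Fin n)} (hl : l.Nodup) :
    (l.map δ).prod * (l.map δ).prod =
      algebraMap F A ((-1) ^ l.length.choose 2 * (l.map η).prod) := by
  induction l with
  | nil => simp
  | cons a t ih =>
    obtain ⟨hat, ht⟩ := List.nodup_cons.1 hl
    rw [List.map_cons, List.prod_cons, mul_assoc, ← mul_assoc _ (δ a), hδ.prod_mul_of_notMem hat,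
      smul_mul_assoc, mul_smul_comm, ← mul_assoc, ← mul_assoc, hδ.mul_self, mul_assoc, ih ht,
      ← map_mul, Algebra.smul_def, ← map_mul, List.length_cons, Nat.choose_succ_succ',
      Nat.choose_one_right, List.map_cons, List.prod_cons, pow_add]
    congr 1
    ring

theorem cliffProd_mul_self (hδ : IsCliffordFamily η δ) (s : Finset (Fin n)) :
    cliffProd δ s * cliffProd δ s = algebraMap F A (cliffProdSq η s) := by
  rw [cliffProd, hδ.prod_mul_self (s.sort_nodup _), length_sort,
    ← List.prod_toFinset _ (s.sort_nodup _), sort_toFinset, cliffProdSq]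

theorem exists_prod_eq_neg_one_pow_smul (hδ : IsCliffordFamily η δ) {l l' : List (Fin n)}
    (hp : l.Perm l') (hl : l.Nodup) :
    ∃ m : ℕ, (l.map δ).prod = (-1 : F) ^ m • (l'.map δ).prod := by
  induction hp with
  | nil => exact ⟨0, by simp⟩
  | cons x _ ih =>
    obtain ⟨m, hm⟩ := ih (List.nodup_cons.1 hl).2
    exact ⟨m, by rw [List.map_cons, List.prod_cons, List.map_cons, List.prod_cons, hm,
      mul_smul_comm]⟩
  | swap x y t =>
    have hxy : y ≠ x := fun h => (List.nodup_cons.1 hl).1 (h ▸ List.mem_cons_self)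
    refine ⟨1, ?_⟩
    simp only [List.map_cons, List.prod_cons, ← mul_assoc, hδ.anticomm y x hxy, neg_mul,
      pow_one, neg_smul, one_smul]
  | trans hp₁ _ ih₁ ih₂ =>
    obtain ⟨m₁, hm₁⟩ := ih₁ hl
    obtain ⟨m₂, hm₂⟩ := ih₂ (hp₁.nodup_iff.1 hl)
    exact ⟨m₁ + m₂, by rw [hm₁, hm₂, smul_smul, pow_add]⟩

theorem exists_cliffProd_mul_cliffProd_compl (hδ : IsCliffordFamily η δ) (s : Finset (Fin n)) :
    ∃ m : ℕ, cliffProd δ s * cliffProd δ sᶜ = (-1 : F) ^ m • cliffProd δ univ := by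
  have hnd : (s.sort (· ≤ ·) ++ sᶜ.sort (· ≤ ·)).Nodup :=
    (s.sort_nodup _).append (sᶜ.sort_nodup _) fun a ha ha' =>
      (mem_compl.1 ((mem_sort _).1 ha')) ((mem_sort _).1 ha)
  have hp : (s.sort (· ≤ ·) ++ sᶜ.sort (· ≤ ·)).Perm (univ.sort (· ≤ ·)) :=
    List.perm_of_nodup_nodup_toFinset_eq hnd (univ.sort_nodup _) (by ext; simp)
  simpa [cliffProd] using hδ.exists_prod_eq_neg_one_pow_smul hp hnd

theorem commute_cliffProd_univ (hδ : IsCliffordFamily η δ) (hη : ∀ a, η a ≠ 0) (hodd : Odd n)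
    (a : Fin n) : Commute (δ a) (cliffProd δ univ) := by
  have hsign : (-1 : F) ^ (univ.erase a).card = 1 := by
    rw [card_erase_of_mem (mem_univ a), card_univ, Fintype.card_fin]
    exact (Nat.Odd.sub_odd hodd odd_one).neg_one_pow
  have h := congrArg (· * δ a) (hδ.mul_cliffProd_mul a univ)
  simp only [hsign, mul_one, mul_assoc, hδ.mul_self, smul_mul_assoc, ← Algebra.commutes,
    ← Algebra.smul_def] at h
  exact smul_right_injective A (hη a) (by simpa only [mul_smul_comm] using h)

/-- Averaging `X` with its conjugate by `δ a` keeps exactly the `δ_s` on which that conjugation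
acts by the same sign as on `δ_t`. -/
theorem sum_filter_even_of_mul_mul (hδ : IsCliffordFamily η δ) (hη : ∀ a, η a ≠ 0)
    [NeZero (2 : F)] {X : A} {S : Finset (Finset (Fin n))} {w : Finset (Fin n) → F}
    (hX : X = ∑ s ∈ S, w s • cliffProd δ s) {t : Finset (Fin n)} {a : Fin n}
    (ha : δ a * X * δ a = (η a * (-1) ^ (t.erase a).card) • X) :
    X = ∑ s ∈ S with Even ((s.erase a).card + (t.erase a).card), w s • cliffProd δ s := by
  have hε : ((-1 : F) ^ (t.erase a).card) ^ 2 = 1 := by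
    rw [← pow_mul, mul_comm, pow_mul, neg_one_sq, one_pow]
  have hconj : X = ∑ s ∈ S, ((-1) ^ ((s.erase a).card + (t.erase a).card) * w s) •
      cliffProd δ s := by
    refine smul_right_injective A
      (mul_ne_zero (hη a) (pow_ne_zero (t.erase a).card (neg_ne_zero.2 one_ne_zero))) ?_
    simp only [← ha]
    rw [hX, Finset.mul_sum, Finset.sum_mul, Finset.smul_sum]
    refine Finset.sum_congr rfl fun s _ => ?_
    rw [mul_smul_comm, smul_mul_assoc, hδ.mul_cliffProd_mul, smul_smul, smul_smul, pow_add]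
    congr 1
    linear_combination -(η a * (-1) ^ (s.erase a).card * w s) * hε
  refine smul_right_injective A (two_ne_zero (α := F)) ?_
  calc (2 : F) • X = X + X := two_smul F X
    _ = ∑ s ∈ S, (2 : F) • (if Even ((s.erase a).card + (t.erase a).card)
          then w s • cliffProd δ s else 0) := by
      nth_rewrite 1 [hX]
      rw [hconj, ← Finset.sum_add_distrib]
      refine Finset.sum_congr rfl fun s _ => ?_
      split_ifs with h
      · rw [h.neg_one_pow, one_mul, two_smul]
      · rw [(Nat.not_even_iff_odd.1 h).neg_one_pow, neg_one_mul, neg_smul, add_neg_cancel,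
          smul_zero]
    _ = (2 : F) • ∑ s ∈ S with Even ((s.erase a).card + (t.erase a).card), w s • cliffProd δ s := by
      rw [Finset.sum_filter, Finset.smul_sum]

theorem eq_add_compl_of_mul_mul (hδ : IsCliffordFamily η δ) (hη : ∀ a, η a ≠ 0)
    (hodd : Odd n) [NeZero (2 : F)] {X : A} {w : Finset (Fin n) → F}
    (hX : X = ∑ s, w s • cliffProd δ s) {t : Finset (Fin n)}
    (ht : ∀ a, δ a * X * δ a = (η a * (-1) ^ (t.erase a).card) • X) :
    X = w t • cliffProd δ t + w tᶜ • cliffProd δ tᶜ := by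
  have hfilter : ∀ u : Finset (Fin n),
      X = ∑ s with ∀ a ∈ u, Even ((s.erase a).card + (t.erase a).card), w s • cliffProd δ s := by
    intro u
    induction u using Finset.induction with
    | empty => simpa using hX
    | insert a u _ ih =>
      rw [hδ.sum_filter_even_of_mul_mul hη ih (ht a), filter_filter]
      simp only [forall_mem_insert, and_comm]
  have : Nonempty (Fin n) := ⟨⟨0, hodd.pos⟩⟩
  have hpair : (univ.filter fun s : Finset (Fin n) =>
      ∀ a ∈ univ, Even ((s.erase a).card + (t.erase a).card)) = {t, tᶜ} := by
    ext s
    simp [forall_even_card_erase_add_card_erase_iff hodd]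
  rw [hfilter univ, hpair, sum_pair ne_compl_self]

theorem linearIndependent_cliffProd (hδ : IsCliffordFamily η δ) (hη : ∀ a, η a ≠ 0)
    (hodd : Odd n) [NeZero (2 : F)] (hω : LinearIndependent F ![1, cliffProd δ univ]) :
    LinearIndependent F (cliffProd δ) := by
  refine Fintype.linearIndependent_iff.2 fun w hw t => ?_
  have hpair := hδ.eq_add_compl_of_mul_mul hη hodd hw.symm (t := t) (by simp)
  obtain ⟨m, hm⟩ := hδ.exists_cliffProd_mul_cliffProd_compl t
  have h := congrArg (cliffProd δ t * ·) hpair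
  simp only [mul_zero, mul_add, mul_smul_comm, hδ.cliffProd_mul_self, hm,
    Algebra.algebraMap_eq_smul_one, smul_smul] at h
  exact (mul_eq_zero.1 (LinearIndependent.pair_iff.1 hω _ _ h.symm).1).resolve_right
    (cliffProdSq_ne_zero hη t)

theorem mem_span_one_cliffProd_univ (hδ : IsCliffordFamily η δ) (hη : ∀ a, η a ≠ 0)
    (hodd : Odd n) [NeZero (2 : F)] (b : Module.Basis (Finset (Fin n)) F A)
    (hb : ∀ s, b s = cliffProd δ s) {z : A} (hz : ∀ a, Commute z (δ a)) :
    z ∈ Submodule.span F ({1, cliffProd δ univ} : Set A) := by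
  have hsum : z = ∑ s, b.repr z s • cliffProd δ s := by simpa [hb] using (b.sum_repr z).symm
  have hconj : ∀ a, δ a * z * δ a = (η a * (-1) ^ ((∅ : Finset (Fin n)).erase a).card) • z := by
    intro a
    rw [(hz a).symm.eq, mul_assoc, hδ.mul_self, ← Algebra.commutes, ← Algebra.smul_def]
    simp
  rw [hδ.eq_add_compl_of_mul_mul hη hodd hsum hconj, compl_empty, cliffProd_empty_s17]
  exact add_mem (Submodule.smul_mem _ _ (Submodule.subset_span (by simp)))
    (Submodule.smul_mem _ _ (Submodule.subset_span (by simp)))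

theorem twist (hδ : IsCliffordFamily η δ) {u : A} (hu : ∀ a, Commute u (δ a))
    (hu2 : u * u = 1) : IsCliffordFamily η (fun a => u * δ a) := by
  have h : ∀ a b, u * δ a * (u * δ b) = δ a * δ b := fun a b => by
    rw [mul_assoc, ← mul_assoc (δ a), ← (hu a).eq, mul_assoc, ← mul_assoc, hu2, one_mul]
  exact ⟨fun a => by rw [h, hδ.mul_self], fun a b hab => by rw [h, h, hδ.anticomm a b hab]⟩

end IsCliffordFamily

theorem cliffProd_mul_left {u : A} {δ : Fin n → A} (hu : ∀ a, Commute u (δ a))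
    (s : Finset (Fin n)) : cliffProd (fun a => u * δ a) s = u ^ s.card * cliffProd δ s := by
  suffices h : ∀ l : List (Fin n),
      (l.map fun a => u * δ a).prod = u ^ l.length * (l.map δ).prod by
    rw [cliffProd, h, length_sort, cliffProd]
  intro l
  induction l with
  | nil => simp
  | cons a t ih =>
    rw [List.map_cons, List.prod_cons, ih, List.map_cons, List.prod_cons, List.length_cons,
      mul_assoc, ← mul_assoc (δ a), ((hu a).pow_left t.length).symm.eq, pow_succ', mul_assoc,
      mul_assoc]

theorem IsCliffordFamily.exists_twist_cliffProd_univ_eq {η : Fin n → F} {β : Fin n → A}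
    (hβ : IsCliffordFamily η β) (hη : ∀ a, η a ≠ 0) (hodd : Odd n) {ω : A}
    (hωβ : ∀ a, Commute ω (β a)) (hω2 : ω * ω = algebraMap F A (cliffProdSq η univ)) :
    ∃ δ : Fin n → A, IsCliffordFamily η δ ∧ cliffProd δ univ = ω ∧
      ∀ z, Commute z ω → (∀ a, Commute z (β a)) → ∀ a, Commute z (δ a) := by
  set c := cliffProdSq η univ
  set ωβ := cliffProd β univ
  have hc : c ≠ 0 := cliffProdSq_ne_zero hη univ
  have hωωβ : Commute ω ωβ := commute_cliffProd_right hωβ univ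
  set u := c⁻¹ • (ω * ωβ)
  have hu : ∀ a, Commute u (β a) := fun a =>
    ((hωβ a).mul_left (hβ.commute_cliffProd_univ hη hodd a).symm).smul_left c⁻¹
  have hu2 : u * u = 1 := by
    rw [smul_mul_smul_comm, hωωβ.symm.mul_mul_mul_comm, hω2, hβ.cliffProd_mul_self, ← map_mul,
      Algebra.smul_def, ← map_mul, mul_mul_mul_comm, inv_mul_cancel₀ hc, one_mul, map_one]
  have huωβ : u * ωβ = ω := by
    rw [smul_mul_assoc, mul_assoc, hβ.cliffProd_mul_self, ← Algebra.commutes, ← Algebra.smul_def,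
      smul_smul, inv_mul_cancel₀ hc, one_smul]
  have hun : u ^ n = u := by
    obtain ⟨k, rfl⟩ := hodd
    rw [pow_succ, pow_mul, sq, hu2, one_pow, one_mul]
  refine ⟨fun a => u * β a, hβ.twist hu hu2, ?_, fun z hzω hzβ a => ?_⟩
  · rw [cliffProd_mul_left hu, card_univ, Fintype.card_fin, hun, huωβ]
  · exact ((hzω.mul_right (commute_cliffProd_right hzβ univ)).smul_right c⁻¹).mul_right (hzβ a)

theorem linearIndependent_one_cliffProd_univ (hn : 0 < n) {δ : Fin n → A}
    (b : Module.Basis (Finset (Fin n)) F A) (hb : ∀ s, b s = cliffProd δ s) :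
    LinearIndependent F ![1, cliffProd δ univ] := by
  have : Nonempty (Fin n) := ⟨⟨0, hn⟩⟩
  have h : ![(1 : A), cliffProd δ univ] = b ∘ ![∅, univ] := by
    ext i; fin_cases i <;> simp [hb]
  rw [h]
  have hne : (univ : Finset (Fin n)) ≠ ∅ := univ_nonempty.ne_empty
  refine b.linearIndependent.comp _ fun i j hij => ?_
  fin_cases i <;> fin_cases j <;> simp_all [eq_comm]

theorem commute_mul_inverse_of_conj_eq {T₁ T₂ x y : A} (hT₁ : IsUnit T₁) (hT₂ : IsUnit T₂)
    (h₁ : y = Ring.inverse T₁ * x * T₁) (h₂ : y = Ring.inverse T₂ * x * T₂) :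
    Commute (T₁ * Ring.inverse T₂) x := by
  obtain ⟨U₁, rfl⟩ := hT₁
  obtain ⟨U₂, rfl⟩ := hT₂
  simp only [Ring.inverse_unit] at h₁ h₂ ⊢
  have h : (U₁ : A) * (↑U₁⁻¹ * x * U₁) * ↑U₂⁻¹ = U₁ * (↑U₂⁻¹ * x * U₂) * ↑U₂⁻¹ := by
    rw [← h₁, ← h₂]
  simp only [mul_assoc, Units.mul_inv_cancel_left, Units.mul_inv, mul_one] at h
  rw [Commute, SemiconjBy, mul_assoc, h]

theorem isCliffordFamily_of_anticomm [NeZero (2 : F)] {p : ℕ} {δ : Fin n → A}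
    (h : ∀ a b : Fin n, δ a * δ b + δ b * δ a = ((2 * eta p a b : ℤ) : A)) :
    IsCliffordFamily (fun a => ((eta p a a : ℤ) : F)) δ where
  mul_self a := by
    refine smul_right_injective A (two_ne_zero (α := F)) ?_
    change (2 : F) • (δ a * δ a) = (2 : F) • algebraMap F A (eta p a a)
    rw [two_smul, h a a, map_intCast, Algebra.smul_def, map_ofNat, Int.cast_mul, Int.cast_ofNat]
  anticomm a b hab := eq_neg_of_add_eq_zero_left (by simpa [eta, hab] using h a b)

theorem eta_self_ne_zero (p : ℕ) (a : Fin n) : ((eta p a a : ℤ) : F) ≠ 0 := by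
  rw [eta, if_pos rfl]
  split_ifs <;> simp

end

theorem stmt17_general {F : Type*} [RCLike F] (p n : ℕ) (hodd : Odd n)
    {A : Type*} [Ring A] [Algebra F A]
    (e : Fin n → A)
    (hrele : ∀ a b : Fin n, e a * e b + e b * e a = ((2 * eta p a b : ℤ) : A))
    (bE : Module.Basis (Finset (Fin n)) F A)
    (hbE : ∀ s, bE s = cliffProd e s)
    (γ β : Fin n → A)
    (hβ : ∀ a b : Fin n, β a * β b + β b * β a = ((2 * eta p a b : ℤ) : A))
    (T₁ T₂ : A) (hT₁ : IsUnit T₁) (hT₂ : IsUnit T₂)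
    (hc₁ : ∀ a : Fin n, γ a = Ring.inverse T₁ * β a * T₁)
    (hc₂ : ∀ a : Fin n, γ a = Ring.inverse T₂ * β a * T₂) :
    (∀ U : A, T₁ * Ring.inverse T₂ * U = U * (T₁ * Ring.inverse T₂)) ∧
    ∃ Z : A, IsUnit Z ∧ (∀ U : A, Z * U = U * Z) ∧
      Z ∈ Submodule.span F ({1, cliffProd e Finset.univ} : Set A) ∧ T₁ = Z * T₂ := by
  set Z := T₁ * Ring.inverse T₂
  have hη := eta_self_ne_zero (F := F) p (n := n)
  have he := isCliffordFamily_of_anticomm (F := F) hrele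
  have hω : ∀ x, Commute (cliffProd e univ) x := commute_of_basis bE fun s =>
    hbE s ▸ commute_cliffProd_right (fun a => (he.commute_cliffProd_univ hη hodd a).symm) s
  obtain ⟨δ, hδ, hδω, hZδ⟩ := IsCliffordFamily.exists_twist_cliffProd_univ_eq
    (isCliffordFamily_of_anticomm hβ) hη hodd (fun a => hω _) (he.cliffProd_mul_self univ)
  have hZβ : ∀ a, Commute Z (β a) := fun a =>
    commute_mul_inverse_of_conj_eq hT₁ hT₂ (hc₁ a) (hc₂ a)
  have hδli := hδ.linearIndependent_cliffProd hη hodd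
    (hδω ▸ linearIndependent_one_cliffProd_univ hodd.pos bE hbE)
  have hZ : ∀ x, Commute Z x :=
    commute_of_basis (basisOfLinearIndependentOfCardEqFinrank hδli
      (Module.finrank_eq_card_basis bE).symm) fun s => by
        rw [coe_basisOfLinearIndependentOfCardEqFinrank]
        exact commute_cliffProd_right (hZδ Z (hω Z).symm hZβ) s
  refine ⟨fun U => (hZ U).eq, Z, hT₁.mul (isUnit_ringInverse.2 hT₂), fun U => (hZ U).eq,
    he.mem_span_one_cliffProd_univ hη hodd bE hbE fun a => hZ _, ?_⟩
  rw [mul_assoc, Ring.inverse_mul_cancel _ hT₂, mul_one]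

/-- Uniqueness part of Pauli's theorem, odd case: in `Cl(p,q)` of odd dimension `n = p + q`, if
`T₁, T₂` are invertible and `γ^a = T₁⁻¹ β^a T₁ = T₂⁻¹ β^a T₂` for all `a`, then `T₁ T₂⁻¹` is
central, i.e. `T₁ = Z T₂` for some invertible central `Z ∈ span{e, e^{1…n}}`. -/
theorem stmt17 {F : Type*} [RCLike F] (p q n : ℕ) (hn : n = p + q) (hodd : Odd n)
    {A : Type*} [Ring A] [Algebra F A]
    (e : Fin n → A)
    (hrele : ∀ a b : Fin n, e a * e b + e b * e a = ((2 * eta p a b : ℤ) : A))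
    (bE : Module.Basis (Finset (Fin n)) F A)
    (hbE : ∀ s, bE s = cliffProd e s)
    (γ β : Fin n → A)
    (hγ : ∀ a b : Fin n, γ a * γ b + γ b * γ a = ((2 * eta p a b : ℤ) : A))
    (hβ : ∀ a b : Fin n, β a * β b + β b * β a = ((2 * eta p a b : ℤ) : A))
    (T₁ T₂ : A) (hT₁ : IsUnit T₁) (hT₂ : IsUnit T₂)
    (hc₁ : ∀ a : Fin n, γ a = Ring.inverse T₁ * β a * T₁)
    (hc₂ : ∀ a : Fin n, γ a = Ring.inverse T₂ * β a * T₂) :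
    (∀ U : A, T₁ * Ring.inverse T₂ * U = U * (T₁ * Ring.inverse T₂)) ∧
    ∃ Z : A, IsUnit Z ∧ (∀ U : A, Z * U = U * Z) ∧
      Z ∈ Submodule.span F ({1, cliffProd e Finset.univ} : Set A) ∧ T₁ = Z * T₂ :=
  stmt17_general p n hodd e hrele bE hbE γ β hβ T₁ T₂ hT₁ hT₂ hc₁ hc₂
end
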